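/- Let A₁, …, A_m ∈ C^{n×n} and suppose there exist real numbers γ₁, …, γ_m and an integer ℓ such that Σ_{k=1}^m γ_k + Σ_{k=1}^m θ(e^{−iγ_k} A_k) < π + 2πℓ and Σ_{k=1}^m γ_k − Σ_{k=1}^m θ(e^{−iγ_k} A_k) > −π + 2πℓ. Then the matrix I + A_m A_{m−1} ⋯ A₁ is invertible. -/

import Mathlib

open scoped Matrix

noncomputable def evnorm {n : ℕ} (x : Fin n → ℂ) : ℝ :=
  Real.sqrt ((star x ⬝ᵥ x).re)

noncomputable def qform {n : ℕ} (A : Matrix (Fin n) (Fin n) ℂ) (x : Fin n → ℂ) : ℂ :=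
  star x ⬝ᵥ A.mulVec x

noncomputable def nnr {n : ℕ} (A : Matrix (Fin n) (Fin n) ℂ) : Set ℂ :=
  {z | ∃ x : Fin n → ℂ, x ≠ 0 ∧ A.mulVec x ≠ 0 ∧
    z = qform A x / ((evnorm x * evnorm (A.mulVec x) : ℝ) : ℂ)}

noncomputable def singAngle {n : ℕ} (A : Matrix (Fin n) (Fin n) ℂ) : ℝ :=
  sSup {θ : ℝ | ∃ x : Fin n → ℂ, x ≠ 0 ∧ A.mulVec x ≠ 0 ∧
    θ = Real.arccos ((qform A x).re / (evnorm x * evnorm (A.mulVec x)))}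

noncomputable def revProd {n m : ℕ} (A : Fin m → Matrix (Fin n) (Fin n) ℂ) :
    Matrix (Fin n) (Fin n) ℂ :=
  (List.ofFn A).reverse.prod

/-!
If `1 + A_m ⋯ A_1` were singular, some `v ≠ 0` would satisfy `B_m ⋯ B_1 v = -e^{-i Σ γ_k} v` for
`B_k = e^{-iγ_k} A_k`. The angle between `v` and this vector is `π - arccos (cos Σ γ_k)`, which is
at least `π - |Σ γ_k - 2πℓ|`. On the other hand, by the triangle inequality for angles between
vectors of `ℝ^{2n} ≅ ℂⁿ`, it is at most the sum of the angles gained at each factor, i.e. at most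
`Σ θ(B_k)`; this contradicts the hypothesis `|Σ γ_k - 2πℓ| < π - Σ θ(B_k)`.
-/

open Matrix InnerProductGeometry WithLp Real

lemma Real.arccos_cos_le_abs (s : ℝ) : arccos (cos s) ≤ |s| := by
  rcases le_or_gt |s| π with hs | hs
  · rw [← Real.cos_abs, Real.arccos_cos (abs_nonneg s) hs]
  · exact (Real.arccos_le_pi _).trans hs.le

lemma List.prod_map_smul {ι R M : Type*} [CommMonoid R] [Monoid M] [MulAction R M]
    [IsScalarTower R M M] [SMulCommClass R M M] (c : ι → R) (f : ι → M) (l : List ι) :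
    (l.map fun i => c i • f i).prod = (l.map c).prod • (l.map f).prod := by
  induction l with
  | nil => simp
  | cons a l ih => simp only [List.map_cons, List.prod_cons, ih, smul_mul_smul_comm]

lemma revProd_smul {m n : ℕ} (c : Fin m → ℂ) (A : Fin m → Matrix (Fin n) (Fin n) ℂ) :
    revProd (fun k => c k • A k) = (∏ k, c k) • revProd A := by
  simp only [revProd, List.ofFn_eq_map, ← List.map_reverse, List.prod_map_smul]
  rw [List.map_reverse, List.prod_reverse, ← List.ofFn_eq_map, List.prod_ofFn]

section VectorAngle

variable {n : ℕ}

lemma evnorm_eq_norm (x : Fin n → ℂ) : evnorm x = ‖toLp 2 x‖ := by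
  rw [EuclideanSpace.norm_eq, evnorm]
  congr 1
  simp [dotProduct, Complex.mul_conj', mul_comm, ← Complex.ofReal_pow]

lemma re_star_dotProduct_eq_inner (x y : Fin n → ℂ) :
    (star x ⬝ᵥ y).re = inner ℝ (toLp 2 x) (toLp 2 y) := by
  simp [PiLp.inner_apply, dotProduct, Complex.inner, mul_comm]

lemma arccos_qform_eq_angle (A : Matrix (Fin n) (Fin n) ℂ) (x : Fin n → ℂ) :
    arccos ((qform A x).re / (evnorm x * evnorm (A *ᵥ x))) =
      angle (toLp 2 x) (toLp 2 (A *ᵥ x)) := by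
  rw [qform, re_star_dotProduct_eq_inner, evnorm_eq_norm, evnorm_eq_norm, angle]

lemma angle_le_singAngle (A : Matrix (Fin n) (Fin n) ℂ) {x : Fin n → ℂ} (hx : x ≠ 0)
    (hAx : A *ᵥ x ≠ 0) : angle (toLp 2 x) (toLp 2 (A *ᵥ x)) ≤ singAngle A := by
  refine le_csSup ⟨π, ?_⟩ ⟨x, hx, hAx, (arccos_qform_eq_angle A x).symm⟩
  rintro θ ⟨y, -, -, rfl⟩
  exact Real.arccos_le_pi _

lemma angle_list_prod_mulVec_le (L : List (Matrix (Fin n) (Fin n) ℂ)) {v : Fin n → ℂ}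
    (hv : v ≠ 0) (hLv : L.prod *ᵥ v ≠ 0) :
    angle (toLp 2 v) (toLp 2 (L.prod *ᵥ v)) ≤ (L.map singAngle).sum := by
  induction L with
  | nil => simp [angle_self, hv]
  | cons M L ih =>
    rw [List.prod_cons, ← mulVec_mulVec] at hLv ⊢
    have hw : L.prod *ᵥ v ≠ 0 := fun h => hLv (by rw [h, mulVec_zero])
    calc angle (toLp 2 v) (toLp 2 (M *ᵥ L.prod *ᵥ v))
        ≤ angle (toLp 2 v) (toLp 2 (L.prod *ᵥ v)) +
            angle (toLp 2 (L.prod *ᵥ v)) (toLp 2 (M *ᵥ L.prod *ᵥ v)) :=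
          angle_le_angle_add_angle _ _ _
      _ ≤ (L.map singAngle).sum + singAngle M := add_le_add (ih hw) (angle_le_singAngle M hw hLv)
      _ = ((M :: L).map singAngle).sum := by rw [List.map_cons, List.sum_cons, add_comm]

lemma angle_revProd_mulVec_le {m : ℕ} (A : Fin m → Matrix (Fin n) (Fin n) ℂ) {v : Fin n → ℂ}
    (hv : v ≠ 0) (hAv : revProd A *ᵥ v ≠ 0) :
    angle (toLp 2 v) (toLp 2 (revProd A *ᵥ v)) ≤ ∑ k, singAngle (A k) := by
  have h := angle_list_prod_mulVec_le _ hv hAv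
  rwa [List.map_reverse, List.sum_reverse, List.map_ofFn, List.sum_ofFn] at h

lemma angle_smul_self_of_norm_eq_one {c : ℂ} (hc : ‖c‖ = 1) {x : Fin n → ℂ} (hx : x ≠ 0) :
    angle (toLp 2 x) (toLp 2 (c • x)) = arccos c.re := by
  have hx' : ‖toLp 2 x‖ ≠ 0 := by simpa using hx
  have hself : star x ⬝ᵥ x = ((‖toLp 2 x‖ ^ 2 : ℝ) : ℂ) := by
    rw [dotProduct_comm, ← EuclideanSpace.inner_toLp_toLp, inner_self_eq_norm_sq_to_K]
    push_cast; rfl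
  rw [angle, ← re_star_dotProduct_eq_inner, dotProduct_smul, hself, WithLp.toLp_smul, norm_smul,
    hc, one_mul, smul_eq_mul, Complex.re_mul_ofReal, ← sq,
    mul_div_cancel_right₀ _ (pow_ne_zero 2 hx')]

end VectorAngle

theorem stmt10 {n m : ℕ} (Ak : Fin m → Matrix (Fin n) (Fin n) ℂ) (γ : Fin m → ℝ) (l : ℤ)
    (h1 : (∑ k, γ k) + (∑ k, singAngle (Complex.exp (-(γ k : ℂ) * Complex.I) • Ak k)) <
        Real.pi + 2 * Real.pi * l)
    (h2 : (∑ k, γ k) - (∑ k, singAngle (Complex.exp (-(γ k : ℂ) * Complex.I) • Ak k)) >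
        -Real.pi + 2 * Real.pi * l) :
    IsUnit (1 + revProd Ak) := by
  set t := ∑ k, γ k
  set S := ∑ k, singAngle (Complex.exp (-(γ k : ℂ) * Complex.I) • Ak k)
  set c : ℂ := -Complex.exp (-(t : ℂ) * Complex.I)
  rw [isUnit_iff_isUnit_det, isUnit_iff_ne_zero]
  intro hdet
  obtain ⟨v, hv, hker⟩ := exists_mulVec_eq_zero_iff.2 hdet
  have hAv_neg : revProd Ak *ᵥ v = -v :=
    eq_neg_of_add_eq_zero_right (by simpa [add_mulVec] using hker)
  have hc : ‖c‖ = 1 := by simp [c, Complex.norm_exp]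
  have hBv : revProd (fun k => Complex.exp (-(γ k : ℂ) * Complex.I) • Ak k) *ᵥ v = c • v := by
    rw [revProd_smul, ← Complex.exp_sum, smul_mulVec, hAv_neg]
    simp [c, t, Finset.sum_mul]
  have hcv : c • v ≠ 0 := smul_ne_zero (norm_ne_zero_iff.1 (by rw [hc]; exact one_ne_zero)) hv
  have hangle := angle_revProd_mulVec_le _ hv (hBv ▸ hcv)
  have hcre : c.re = -cos (t - l * (2 * π)) := by
    rw [Real.cos_sub_int_mul_two_pi]
    simp [c, Complex.exp_re]
  rw [hBv, angle_smul_self_of_norm_eq_one hc hv, hcre, Real.arccos_neg] at hangle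
  have hreduced : |t - l * (2 * π)| < π - S :=
    abs_sub_lt_iff.2 ⟨by linarith, by linarith⟩
  linarith [Real.arccos_cos_le_abs (t - l * (2 * π))]
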